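/- arXiv:2002.08120 — 2 statements merged into one kernel-verified Lean document; each statement's English description precedes it below -/
import Mathlib

section
/- For every positive integer n with n′ := rad(n), m := φ(n), m′ := φ(n′), and h := n/n′, and re-indexing rows and columns of G_n by {0,…,m−1} (so that G_n has (i,j) entry c_n(i−j)), one has, writing i = h·i′ + i″ and j = h·j′ + j″ with 0 ≤ i′, j′ < m′ and 0 ≤ i″, j″ < h: the (i,j) entry of G_n equals h·c_{n′}(i′ − j′) if i″ = j″ and equals 0 otherwise; equivalently, G_n = h·(G_{n′} ⊗ Id_h), the Kronecker product of h·G_{n′} with the h×h identity matrix. -/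
open Matrix Polynomial BigOperators

/-- The Frobenius norm of a square complex matrix. -/
noncomputable def frobNorm {k : ℕ} (A : Matrix (Fin k) (Fin k) ℂ) : ℝ :=
  Real.sqrt (∑ i, ∑ j, ‖A i j‖ ^ 2)

/-- The condition number `Cond(A) = ‖A‖ ‖A⁻¹‖` (Frobenius norm). -/
noncomputable def condNum {k : ℕ} (A : Matrix (Fin k) (Fin k) ℂ) : ℝ :=
  frobNorm A * frobNorm A⁻¹

/-- The Vandermonde matrix with (i,j) entry `ζ i ^ j` (0-indexed). -/
def vand {m : ℕ} (ζ : Fin m → ℂ) : Matrix (Fin m) (Fin m) ℂ :=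
  Matrix.of fun i j => ζ i ^ (j : ℕ)

/-- The radical of `n`: the product of the distinct prime factors of `n`. -/
def rad (n : ℕ) : ℕ := ∏ p ∈ n.primeFactors, p

/-- The Ramanujan sum `c_n(t)`: the sum of the `t`-th powers of the
primitive `n`-th roots of unity in `ℂ`. -/
noncomputable def ram (n : ℕ) (t : ℤ) : ℂ := ∑ z ∈ primitiveRoots n ℂ, z ^ t

/-!
Each Gram entry is a Ramanujan sum, `(V_nᴴ V_n) i j = c_n(j - i)`. Möbius inversion of
`∑_{d ∣ n} c_d(t) = n [n ∣ t]` gives `c_n(t) = ∑_{d ∣ n} μ(n/d) d [d ∣ t]`; a nonzero `μ(n/d)`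
forces `n/d ∣ rad n`, so only `d = h e` with `h = n / rad n` and `e ∣ rad n` contribute. Hence
`c_n(t) = 0` unless `h ∣ t`, and `c_n(h s) = h c_{rad n}(s)`. As `|j'' - i''| < h`, the index
difference `j - i = h (j' - i') + (j'' - i'')` is divisible by `h` exactly when `i'' = j''`.
-/

open Finset
open scoped ArithmeticFunction.Moebius

theorem sum_nthRootsFinset_zpow {k : ℕ} (hk : 0 < k) (t : ℤ) :
    ∑ z ∈ nthRootsFinset k (1 : ℂ), z ^ t = if (k : ℤ) ∣ t then (k : ℂ) else 0 := by
  have : NeZero k := ⟨hk.ne'⟩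
  obtain ⟨ζ, hζ⟩ : ∃ ζ : ℂ, IsPrimitiveRoot ζ k := ⟨_, Complex.isPrimitiveRoot_exp k hk.ne'⟩
  have himage : nthRootsFinset k (1 : ℂ) = (range k).image (ζ ^ ·) := by
    ext x
    simp only [mem_image, mem_range, mem_nthRootsFinset hk]
    refine ⟨hζ.eq_pow_of_pow_eq_one, ?_⟩
    rintro ⟨i, -, rfl⟩
    rw [← pow_mul, mul_comm, pow_mul, hζ.pow_eq_one, one_pow]
  have hpow : ∀ i : ℕ, (ζ ^ i) ^ t = (ζ ^ t) ^ i := fun i => by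
    rw [← zpow_natCast, ← _root_.zpow_mul, mul_comm, _root_.zpow_mul, zpow_natCast]
  rw [himage, sum_image fun a ha b hb => hζ.pow_inj (mem_range.1 ha) (mem_range.1 hb)]
  simp only [hpow]
  split_ifs with hdvd
  · simp [(hζ.zpow_eq_one_iff_dvd t).2 hdvd]
  · rw [geom_sum_eq (mt (hζ.zpow_eq_one_iff_dvd t).1 hdvd), ← hpow, hζ.pow_eq_one,
      _root_.one_zpow, sub_self, zero_div]

theorem sum_divisors_ram {k : ℕ} (hk : 0 < k) (t : ℤ) :
    ∑ d ∈ k.divisors, ram d t = if (k : ℤ) ∣ t then (k : ℂ) else 0 := by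
  have : NeZero k := ⟨hk.ne'⟩
  rw [← sum_nthRootsFinset_zpow hk, IsPrimitiveRoot.nthRoots_one_eq_biUnion_primitiveRoots,
    sum_biUnion fun a _ b _ hab => IsPrimitiveRoot.disjoint hab]
  rfl

theorem ram_eq_sum_divisors_moebius {n : ℕ} (hn : 0 < n) (t : ℤ) :
    ram n t = ∑ d ∈ n.divisors, (μ (n / d) : ℂ) * if (d : ℤ) ∣ t then (d : ℂ) else 0 := by
  rw [← ArithmeticFunction.sum_eq_iff_sum_mul_moebius_eq.mp (fun k hk => sum_divisors_ram hk t)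
    n hn, Nat.sum_divisorsAntidiagonal' fun a b => (μ a : ℂ) * if (b : ℤ) ∣ t then (b : ℂ) else 0]

theorem ram_neg {n : ℕ} (hn : 0 < n) (t : ℤ) : ram n (-t) = ram n t := by
  simp only [ram_eq_sum_divisors_moebius hn, Int.dvd_neg]

theorem rad_eq_radical (n : ℕ) : rad n = UniqueFactorizationMonoid.radical n :=
  Nat.radical_eq_prod_primeFactors.symm

theorem rad_dvd_self (n : ℕ) : rad n ∣ n := Nat.prod_primeFactors_dvd n

theorem rad_pos {n : ℕ} (hn : 0 < n) : 0 < rad n := Nat.pos_of_dvd_of_pos (rad_dvd_self n) hn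

theorem div_rad_pos {n : ℕ} (hn : 0 < n) : 0 < n / rad n :=
  Nat.div_pos (Nat.le_of_dvd hn (rad_dvd_self n)) (rad_pos hn)

theorem div_rad_dvd_of_squarefree {n d : ℕ} (hn : n ≠ 0) (hd : d ∣ n)
    (hsq : Squarefree (n / d)) : n / rad n ∣ d := by
  have hrad : n / d ∣ rad n := by
    rw [rad_eq_radical]
    exact (UniqueFactorizationMonoid.dvd_radical_iff hsq.isRadical hn).2 (Nat.div_dvd_of_dvd hd)
  simpa only [Nat.div_div_self hd hn] using Nat.div_dvd_div_left (rad_dvd_self n) hrad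

theorem ram_eq_sum_divisors_rad {n : ℕ} (hn : 0 < n) (t : ℤ) :
    ram n t = ∑ e ∈ (rad n).divisors, (μ (rad n / e) : ℂ) *
      if ((n / rad n * e : ℕ) : ℤ) ∣ t then ((n / rad n * e : ℕ) : ℂ) else 0 := by
  set h := n / rad n
  have hh : 0 < h := div_rad_pos hn
  have hmul : h * rad n = n := Nat.div_mul_cancel (rad_dvd_self n)
  have hsub : (rad n).divisors.image (h * ·) ⊆ n.divisors := by
    intro d hd
    obtain ⟨e, he, rfl⟩ := mem_image.1 hd
    exact Nat.mem_divisors.2 ⟨hmul ▸ mul_dvd_mul_left h (Nat.dvd_of_mem_divisors he), hn.ne'⟩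
  rw [ram_eq_sum_divisors_moebius hn, ← sum_subset hsub,
    sum_image fun a _ b _ hab => Nat.eq_of_mul_eq_mul_left hh hab]
  · refine sum_congr rfl fun e _ => ?_
    rw [← Nat.mul_div_mul_left (rad n) e hh, hmul]
  · intro d hd hd'
    suffices μ (n / d) = 0 by simp [this]
    refine ArithmeticFunction.moebius_eq_zero_of_not_squarefree fun hsq => hd' ?_
    obtain ⟨e, rfl⟩ := div_rad_dvd_of_squarefree hn.ne' (Nat.dvd_of_mem_divisors hd) hsq
    refine mem_image.2 ⟨e, Nat.mem_divisors.2 ⟨?_, (rad_pos hn).ne'⟩, rfl⟩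
    exact Nat.dvd_of_mul_dvd_mul_left hh (by rw [hmul]; exact Nat.dvd_of_mem_divisors hd)

theorem ram_div_rad_mul {n : ℕ} (hn : 0 < n) (s : ℤ) :
    ram n ((n / rad n : ℕ) * s) = (n / rad n : ℕ) * ram (rad n) s := by
  have hh : ((n / rad n : ℕ) : ℤ) ≠ 0 := by exact_mod_cast (div_rad_pos hn).ne'
  rw [ram_eq_sum_divisors_rad hn, ram_eq_sum_divisors_moebius (rad_pos hn), mul_sum]
  refine sum_congr rfl fun e _ => ?_
  simp only [Nat.cast_mul, mul_dvd_mul_iff_left hh]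
  split_ifs <;> ring

theorem ram_eq_zero_of_not_dvd {n : ℕ} (hn : 0 < n) {t : ℤ}
    (ht : ¬((n / rad n : ℕ) : ℤ) ∣ t) : ram n t = 0 := by
  rw [ram_eq_sum_divisors_rad hn]
  refine sum_eq_zero fun e _ => ?_
  rw [if_neg fun hdvd => ht (dvd_trans (by push_cast; exact dvd_mul_right _ _) hdvd), mul_zero]

theorem conjTranspose_vand_mul_vand_apply {m : ℕ} (ζ : Fin m → ℂ)
    (hζ : ∀ k, ‖ζ k‖ = 1) (i j : Fin m) : ((vand ζ)ᴴ * vand ζ) i j = ∑ k, ζ k ^ ((j : ℤ) - i) := by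
  rw [mul_apply]
  refine sum_congr rfl fun k _ => ?_
  have hζ0 : ζ k ≠ 0 := norm_ne_zero_iff.1 (by simp [hζ k])
  simp only [conjTranspose_apply, vand, of_apply, star_pow, RCLike.star_def,
    ← Complex.inv_eq_conj (hζ k)]
  rw [zpow_sub₀ hζ0, zpow_natCast, zpow_natCast, inv_pow, div_eq_inv_mul]

theorem sum_zpow_eq_ram {ι : Type*} [Fintype ι] {n : ℕ} (hn : 0 < n) (ζ : ι → ℂ)
    (hcard : Fintype.card ι = n.totient) (hζinj : Function.Injective ζ)
    (hζ : ∀ k, IsPrimitiveRoot (ζ k) n) (t : ℤ) : ∑ k, ζ k ^ t = ram n t := by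
  have himage : univ.image ζ = primitiveRoots n ℂ := by
    refine eq_of_subset_of_card_le (fun z hz => ?_) ?_
    · obtain ⟨k, -, rfl⟩ := mem_image.1 hz
      exact (mem_primitiveRoots hn).2 (hζ k)
    · rw [(Complex.isPrimitiveRoot_exp n hn.ne').card_primitiveRoots,
        card_image_of_injective _ hζinj, card_univ, hcard]
  rw [ram, ← himage, sum_image fun a _ b _ hab => hζinj hab]

theorem gram_entry_kronecker_general (n : ℕ)
    (ζ : Fin n.totient → ℂ) (hζinj : Function.Injective ζ)
    (hζ : ∀ i, IsPrimitiveRoot (ζ i) n)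
    (i j : Fin n.totient) (i' j' : Fin (rad n).totient) (i'' j'' : Fin (n / rad n))
    (hi : (i : ℕ) = (n / rad n) * (i' : ℕ) + (i'' : ℕ))
    (hj : (j : ℕ) = (n / rad n) * (j' : ℕ) + (j'' : ℕ)) :
    ((vand ζ)ᴴ * vand ζ) i j =
      if i'' = j'' then ((n / rad n : ℕ) : ℂ) * ram (rad n) ((i' : ℤ) - (j' : ℤ)) else 0 := by
  have hn : 0 < n := Nat.totient_pos.1 i.pos
  have hnorm k : ‖ζ k‖ = 1 := Complex.norm_eq_one_of_pow_eq_one (hζ k).pow_eq_one hn.ne'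
  have hsplit : ((j : ℕ) : ℤ) - (i : ℕ) =
      ((n / rad n : ℕ) : ℤ) * ((j' : ℤ) - i') + ((j'' : ℤ) - i'') := by
    rw [hi, hj]; push_cast; ring
  rw [conjTranspose_vand_mul_vand_apply ζ hnorm,
    sum_zpow_eq_ram hn ζ (Fintype.card_fin _) hζinj hζ, hsplit]
  split_ifs with hij
  · rw [hij, sub_self, add_zero, ram_div_rad_mul hn, ← ram_neg (rad_pos hn), neg_sub]
  · refine ram_eq_zero_of_not_dvd hn fun hdvd => hij (Fin.ext ?_)
    have hlt : |(j'' : ℤ) - i''| < ((n / rad n : ℕ) : ℤ) := by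
      rw [abs_sub_lt_iff]; constructor <;> omega
    have := Int.eq_zero_of_abs_lt_dvd ((dvd_add_right (dvd_mul_right _ _)).1 hdvd) hlt
    omega

/-- With `n' = rad n` and `h = n / n'`, writing the 0-based indices
`i = h * i' + i''` and `j = h * j' + j''` (`0 ≤ i', j' < φ(n')`, `0 ≤ i'', j'' < h`),
the `(i,j)` entry of `G_n` equals `h * c_{n'}(i' - j')` if `i'' = j''` and `0`
otherwise; i.e. `G_n = h • (G_{n'} ⊗ Id_h)`. -/
theorem gram_entry_kronecker (n : ℕ) (hn : 0 < n)
    (ζ : Fin n.totient → ℂ) (hζinj : Function.Injective ζ)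
    (hζ : ∀ i, IsPrimitiveRoot (ζ i) n)
    (i j : Fin n.totient) (i' j' : Fin (rad n).totient) (i'' j'' : Fin (n / rad n))
    (hi : (i : ℕ) = (n / rad n) * (i' : ℕ) + (i'' : ℕ))
    (hj : (j : ℕ) = (n / rad n) * (j' : ℕ) + (j'' : ℕ)) :
    ((vand ζ)ᴴ * vand ζ) i j =
      if i'' = j'' then ((n / rad n : ℕ) : ℂ) * ram (rad n) ((i' : ℤ) - (j' : ℤ)) else 0 :=
  gram_entry_kronecker_general n ζ hζinj hζ i j i' j' i'' j'' hi hj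
end

section
/- For every prime number p, Cond(V_p) = (p − 1)·√(2(1 − 1/p)). -/
open Matrix Polynomial BigOperators

/-!
The inverse of `V_p` is explicit. Since the `ζ_i` are exactly the nontrivial `p`-th roots of unity,
`∑_{j < p-1} w^j = -w⁻¹` for every such `w`, and this geometric-sum identity shows that
`(V_p⁻¹)_{jk} = (ζ_k^{-j} - ζ_k) / p`. Every entry of `V_p` has modulus one, so `‖V_p‖ = p - 1`;
each column of `V_p⁻¹` has squared norm `(2(p-1) + 2) / p² = 2 / p`, so `‖V_p⁻¹‖² = 2(p-1)/p`.
-/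

open Finset

theorem geom_sum_range_eq_neg_inv_of_pow_succ_eq_one {K : Type*} [Field K] {m : ℕ} {z : K}
    (hz : z ^ (m + 1) = 1) (h1 : z ≠ 1) : ∑ j ∈ range m, z ^ j = -z⁻¹ := by
  have hfull : ∑ j ∈ range (m + 1), z ^ j = 0 := by
    rw [geom_sum_eq h1, hz, sub_self, zero_div]
  have hlast : z ^ m = z⁻¹ := eq_inv_of_mul_eq_one_left (by rwa [← pow_succ])
  rw [sum_range_succ, hlast] at hfull
  exact eq_neg_of_add_eq_zero_left hfull

section RootsOfUnity

variable {m : ℕ} {ζ : Fin m → ℂ}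

noncomputable def vandRootsInv (ζ : Fin m → ℂ) : Matrix (Fin m) (Fin m) ℂ :=
  Matrix.of fun j k => ((ζ k)⁻¹ ^ (j : ℕ) - ζ k) / (m + 1)

theorem vand_mul_vandRootsInv (hinj : Function.Injective ζ) (hpow : ∀ i, ζ i ^ (m + 1) = 1)
    (hne : ∀ i, ζ i ≠ 1) : vand ζ * vandRootsInv ζ = 1 := by
  have hζ0 : ∀ i, ζ i ≠ 0 := fun i h => by simpa [h] using hpow i
  ext i k
  have hentry : (vand ζ * vandRootsInv ζ) i k =
      (∑ j ∈ range m, (ζ i * (ζ k)⁻¹) ^ j - ζ k * ∑ j ∈ range m, ζ i ^ j) / (m + 1) := by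
    simp only [mul_apply, vand, vandRootsInv, of_apply]
    rw [Fin.sum_univ_eq_sum_range (fun j => ζ i ^ j * (((ζ k)⁻¹ ^ j - ζ k) / (m + 1))) m,
      mul_sum, ← sum_sub_distrib, sum_div]
    refine sum_congr rfl fun j _ => ?_
    ring
  rw [hentry, geom_sum_range_eq_neg_inv_of_pow_succ_eq_one (hpow i) (hne i), one_apply]
  have hm : (m + 1 : ℂ) ≠ 0 := Nat.cast_add_one_ne_zero m
  split_ifs with hik
  · subst hik
    rw [mul_inv_cancel₀ (hζ0 i)]
    simp only [one_pow, sum_const, card_range, nsmul_eq_mul, mul_one]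
    field_simp [hζ0 i]
    ring
  · have hw1 : ζ i * (ζ k)⁻¹ ≠ 1 := fun h => hik (hinj ((mul_inv_eq_one₀ (hζ0 k)).mp h))
    have hwpow : (ζ i * (ζ k)⁻¹) ^ (m + 1) = 1 := by
      rw [mul_pow, inv_pow, hpow, hpow, inv_one, mul_one]
    rw [geom_sum_range_eq_neg_inv_of_pow_succ_eq_one hwpow hw1, mul_inv, inv_inv]
    ring

theorem frobNorm_vand_of_norm_eq_one (hnorm : ∀ i, ‖ζ i‖ = 1) : frobNorm (vand ζ) = m := by
  simp [frobNorm, vand, hnorm]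

theorem sum_range_norm_inv_pow_sub_sq {z : ℂ} (hz : z ^ (m + 1) = 1) (h1 : z ≠ 1) :
    ∑ j ∈ range m, ‖z⁻¹ ^ j - z‖ ^ 2 = 2 * (m + 1) := by
  have hnorm : ‖z‖ = 1 := Complex.norm_eq_one_of_pow_eq_one hz m.succ_ne_zero
  have hterm : ∀ j, ‖z⁻¹ ^ j - z‖ ^ 2 = 2 - 2 * (z⁻¹ ^ (j + 1)).re := by
    intro j
    rw [Complex.sq_norm, Complex.normSq_sub, ← Complex.inv_eq_conj hnorm, ← pow_succ,
      ← Complex.sq_norm, ← Complex.sq_norm, norm_pow, norm_inv, hnorm]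
    ring
  have hinv : z⁻¹ ^ (m + 1) = 1 := by rw [inv_pow, hz, inv_one]
  have hshift : ∑ j ∈ range m, z⁻¹ ^ (j + 1) = -1 := by
    simp_rw [pow_succ', ← mul_sum]
    rw [geom_sum_range_eq_neg_inv_of_pow_succ_eq_one hinv (inv_ne_one.mpr h1),
      mul_neg, mul_inv_cancel₀ (inv_ne_zero (norm_ne_zero_iff.mp (hnorm ▸ one_ne_zero)))]
  simp_rw [hterm]
  rw [sum_sub_distrib, ← mul_sum, ← Complex.re_sum, hshift]
  simp only [sum_const, card_range, nsmul_eq_mul, Complex.neg_re, Complex.one_re]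
  ring

theorem frobNorm_vandRootsInv (hpow : ∀ i, ζ i ^ (m + 1) = 1) (hne : ∀ i, ζ i ≠ 1) :
    frobNorm (vandRootsInv ζ) = √(2 * m / (m + 1)) := by
  have hcol : ∀ k, ∑ j, ‖vandRootsInv ζ j k‖ ^ 2 = 2 / (m + 1) := by
    intro k
    have hnorm : ‖(m + 1 : ℂ)‖ = m + 1 := by exact_mod_cast Complex.norm_natCast (m + 1)
    simp only [vandRootsInv, of_apply, norm_div, hnorm, div_pow, ← sum_div]
    rw [Fin.sum_univ_eq_sum_range (fun j => ‖(ζ k)⁻¹ ^ j - ζ k‖ ^ 2),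
      sum_range_norm_inv_pow_sub_sq (hpow k) (hne k)]
    field_simp
  rw [frobNorm, sum_comm]
  simp only [hcol, sum_const, card_univ, Fintype.card_fin, nsmul_eq_mul]
  ring_nf

theorem condNum_vand_of_pow_succ_eq_one (hinj : Function.Injective ζ)
    (hpow : ∀ i, ζ i ^ (m + 1) = 1) (hne : ∀ i, ζ i ≠ 1) :
    condNum (vand ζ) = m * √(2 * m / (m + 1)) := by
  rw [condNum, Matrix.inv_eq_right_inv (vand_mul_vandRootsInv hinj hpow hne),
    frobNorm_vandRootsInv hpow hne,
    frobNorm_vand_of_norm_eq_one fun i => Complex.norm_eq_one_of_pow_eq_one (hpow i) m.succ_ne_zero]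

end RootsOfUnity

/-- For every prime `p`, `Cond(V_p) = (p - 1) * √(2 * (1 - 1/p))`. -/
theorem cond_vand_prime (p : ℕ) (hp : p.Prime)
    (ζ : Fin p.totient → ℂ) (hζinj : Function.Injective ζ)
    (hζ : ∀ i, IsPrimitiveRoot (ζ i) p) :
    condNum (vand ζ) = ((p : ℝ) - 1) * Real.sqrt (2 * (1 - 1 / (p : ℝ))) := by
  have hp_eq : p.totient + 1 = p := by
    rw [Nat.totient_prime hp, Nat.sub_add_cancel hp.one_le]
  have hpR : (p : ℝ) = p.totient + 1 := by exact_mod_cast hp_eq.symm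
  rw [condNum_vand_of_pow_succ_eq_one hζinj (fun i => by rw [hp_eq]; exact (hζ i).pow_eq_one)
    (fun i => (hζ i).ne_one hp.one_lt), hpR]
  congr 2
  · ring
  · field_simp
    ring
end
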